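/- arXiv:1104.4612 — 10 statements merged into one kernel-verified Lean document; each statement's English description precedes it below -/
import Mathlib

section
/- Let S be a real m×n matrix and suppose rank(S̄̄) < n. Then there exists a nonzero vector b ∈ ℝⁿ such that S·diag(b)·Sᵀ = 0, and consequently, for any symmetric m×m matrix Σ, any μ ∈ ℝ^m and any observations Y₁,…,Y_L ∈ ℝ^m, the likelihood objective satisfies Φ(p + b) = Φ(p) for every p ∈ ℝⁿ at which M_p is invertible; in particular the minimization of Φ over ℝⁿ has no unique solution. -/
open Matrix

/-- The matrix of entrywise products of pairs of rows of `S`: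
`(S̄̄)_{(i,j),k} = S i k * S j k`. -/
noncomputable def pairProdMatrix {m n : ℕ} (S : Matrix (Fin m) (Fin n) ℝ) :
    Matrix (Fin m × Fin m) (Fin n) ℝ :=
  Matrix.of fun ij k => S ij.1 k * S ij.2 k

/-- The covariance matrix `M_p = S · diag p · Sᵀ + Σ`. -/
noncomputable def covMat {m n : ℕ} (S : Matrix (Fin m) (Fin n) ℝ)
    (Sig : Matrix (Fin m) (Fin m) ℝ) (p : Fin n → ℝ) : Matrix (Fin m) (Fin m) ℝ :=
  S * Matrix.diagonal p * Sᵀ + Sig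

/-- The negative log-likelihood objective
`Φ(p) = (1/L)·Σᵢ (Yᵢ−μ)ᵀ M_p⁻¹ (Yᵢ−μ) + log|det M_p|`. -/
noncomputable def mlObjective {m n : ℕ} (S : Matrix (Fin m) (Fin n) ℝ)
    (Sig : Matrix (Fin m) (Fin m) ℝ) (L : ℕ) (μ : Fin m → ℝ)
    (Y : Fin L → Fin m → ℝ) (p : Fin n → ℝ) : ℝ :=
  (1 / (L : ℝ)) * ∑ i, (Y i - μ) ⬝ᵥ ((covMat S Sig p)⁻¹ *ᵥ (Y i - μ)) +
    Real.log |(covMat S Sig p).det|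

/-- If `rank S̄̄ < n` then there is a nonzero `b` with
`S · diag b · Sᵀ = 0`, and consequently the likelihood objective satisfies
`Φ(p + b) = Φ(p)` for every `p` at which `M_p` is invertible (for any symmetric
`Σ`, any `μ`, and any observations `Y₁,…,Y_L`); in particular the minimization
of `Φ` has no unique solution. -/
theorem stmt0 {m n : ℕ} (S : Matrix (Fin m) (Fin n) ℝ)
    (hrank : (pairProdMatrix S).rank < n) :
    ∃ b : Fin n → ℝ, b ≠ 0 ∧ S * Matrix.diagonal b * Sᵀ = 0 ∧
      ∀ (Sig : Matrix (Fin m) (Fin m) ℝ), Sig.IsSymm →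
        ∀ (μ : Fin m → ℝ) (L : ℕ) (Y : Fin L → Fin m → ℝ) (p : Fin n → ℝ),
          IsUnit (covMat S Sig p).det →
            mlObjective S Sig L μ Y (p + b) = mlObjective S Sig L μ Y p ∧
              p + b ≠ p := by
  set A := pairProdMatrix S
  have h1 := A.mulVecLin.finrank_range_add_finrank_ker
  rw [Matrix.rank] at hrank
  simp [Module.finrank_fintype_fun_eq_card] at h1
  have hk : 0 < Module.finrank ℝ (LinearMap.ker A.mulVecLin) := by omega
  have hne : LinearMap.ker A.mulVecLin ≠ ⊥ := by
    intro hbot; rw [hbot, finrank_bot] at hk; omega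
  obtain ⟨b, hb, hb0⟩ := Submodule.exists_mem_ne_zero_of_ne_bot hne
  have hb' : A *ᵥ b = 0 := hb
  have hzero : S * Matrix.diagonal b * Sᵀ = 0 := by
    ext i j
    have := congrFun hb' (i, j)
    simp only [mulVec, dotProduct, A, pairProdMatrix, Matrix.of_apply, Pi.zero_apply] at this
    rw [Matrix.mul_apply]
    simp only [Matrix.mul_diagonal, Matrix.transpose_apply, Matrix.zero_apply]
    rw [← this]
    exact Finset.sum_congr rfl fun k _ => by ring
  refine ⟨b, hb0, hzero, fun Sig _ μ L Y p _ => ⟨?_, ?_⟩⟩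
  · have hcov : covMat S Sig (p + b) = covMat S Sig p := by
      unfold covMat
      rw [show Matrix.diagonal (p + b) = Matrix.diagonal p + Matrix.diagonal b from by
        ext i j; simp [Matrix.diagonal_apply]; split <;> simp_all,
        Matrix.mul_add, Matrix.add_mul, hzero, add_zero]
    unfold mlObjective
    rw [hcov]
  · intro h
    exact hb0 (by simpa using congrArg (· - p) h)
end

section
/- Let M be a real symmetric positive-definite m×m matrix, W a real symmetric m×m matrix such that 2W − M is positive definite, and A a nonzero real symmetric m×m matrix. Then trace(M⁻¹·A·M⁻¹·A·M⁻¹·(2W − M)) > 0. -/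
/-!
Writing `S = 2W − M`, the matrix is `Cᴴ M⁻¹ C S` with `C = A M⁻¹ ≠ 0`. Factoring the positive
definite matrices as `M⁻¹ = Rᴴ R` and `S = Qᴴ Q` with `R`, `Q` invertible, cyclicity of the trace
turns its trace into `‖R C Qᴴ‖²` (Frobenius norm), which is positive because `R C Qᴴ ≠ 0`.
-/

open Matrix
open scoped ComplexOrder MatrixOrder

namespace Matrix

variable {𝕜 m n : Type*} [RCLike 𝕜] [Fintype m] [Fintype n]

theorem trace_conjTranspose_mul_self_pos {C : Matrix m n 𝕜} (hC : C ≠ 0) :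
    0 < (Cᴴ * C).trace :=
  (posSemidef_conjTranspose_mul_self C).trace_nonneg.lt_of_ne'
    (trace_conjTranspose_mul_self_eq_zero_iff.not.mpr hC)

theorem mul_mul_ne_zero_of_isUnit [DecidableEq m] [DecidableEq n] {R : Matrix m m 𝕜}
    {Q : Matrix n n 𝕜} {C : Matrix m n 𝕜} (hR : IsUnit R) (hQ : IsUnit Q) (hC : C ≠ 0) :
    R * C * Q ≠ 0 := by
  intro h
  apply hC
  calc C = R⁻¹ * (R * C * Q) * Q⁻¹ := by
        rw [Matrix.mul_assoc R, nonsing_inv_mul_cancel_left _ _ ((isUnit_iff_isUnit_det R).mp hR),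
          mul_nonsing_inv_cancel_right _ _ ((isUnit_iff_isUnit_det Q).mp hQ)]
    _ = 0 := by rw [h, Matrix.mul_zero, Matrix.zero_mul]

theorem PosDef.trace_conjTranspose_mul_mul_mul_pos [DecidableEq m] [DecidableEq n]
    {T : Matrix m m 𝕜} {S : Matrix n n 𝕜} {C : Matrix m n 𝕜}
    (hT : T.PosDef) (hS : S.PosDef) (hC : C ≠ 0) : 0 < (Cᴴ * T * C * S).trace := by
  obtain ⟨R, hR, rfl⟩ := CStarAlgebra.isStrictlyPositive_iff_eq_star_mul_self.mp
    hT.isStrictlyPositive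
  obtain ⟨Q, hQ, rfl⟩ := CStarAlgebra.isStrictlyPositive_iff_eq_star_mul_self.mp
    hS.isStrictlyPositive
  calc (0 : 𝕜) < ((R * C * Qᴴ)ᴴ * (R * C * Qᴴ)).trace :=
        trace_conjTranspose_mul_self_pos (mul_mul_ne_zero_of_isUnit hR hQ.star hC)
    _ = (Cᴴ * (star R * R) * C * (star Q * Q)).trace := by
      simp only [conjTranspose_mul, conjTranspose_conjTranspose, star_eq_conjTranspose,
        Matrix.mul_assoc]
      rw [trace_mul_comm]
      simp only [Matrix.mul_assoc]

end Matrix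

theorem stmt4_general {m : ℕ} (M W A : Matrix (Fin m) (Fin m) ℝ)
    (hM : M.PosDef) (h2WM : ((2 : ℝ) • W - M).PosDef)
    (hA : A.IsSymm) (hA0 : A ≠ 0) :
    0 < (M⁻¹ * A * M⁻¹ * A * M⁻¹ * ((2 : ℝ) • W - M)).trace := by
  have hAM : A * M⁻¹ ≠ 0 := by
    simpa only [Matrix.one_mul] using mul_mul_ne_zero_of_isUnit isUnit_one hM.inv.isUnit hA0
  have hfactor : M⁻¹ * A * M⁻¹ * A * M⁻¹ = (A * M⁻¹)ᴴ * M⁻¹ * (A * M⁻¹) := by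
    rw [conjTranspose_mul, hM.inv.isHermitian.eq, conjTranspose_eq_transpose_of_trivial, hA.eq]
    simp only [Matrix.mul_assoc]
  rw [hfactor]
  exact hM.inv.trace_conjTranspose_mul_mul_mul_pos h2WM hAM

/-- If `M` is positive definite, `W` is symmetric with
`2W − M` positive definite, and `A` is a nonzero symmetric matrix, then
`trace (M⁻¹ A M⁻¹ A M⁻¹ (2W − M)) > 0`. -/
theorem stmt4 {m : ℕ} (M W A : Matrix (Fin m) (Fin m) ℝ)
    (hM : M.PosDef) (hW : W.IsSymm) (h2WM : ((2 : ℝ) • W - M).PosDef)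
    (hA : A.IsSymm) (hA0 : A ≠ 0) :
    0 < (M⁻¹ * A * M⁻¹ * A * M⁻¹ * ((2 : ℝ) • W - M)).trace :=
  stmt4_general M W A hM h2WM hA hA0
end

section
/- Let S be a real m×n matrix with rank(S̄̄) = n, let Σ be a symmetric m×m matrix, and let W be a symmetric m×m matrix. For p ∈ ℝⁿ set M_p = S·diag(p)·Sᵀ + Σ, and define Φ₀(p) = trace(M_p⁻¹·W) + log|det(M_p)|. Then the set Ω = {p ∈ ℝⁿ : M_p is positive definite and 2W − M_p is positive definite} is convex, and Φ₀ is strictly convex on Ω; in particular Φ₀ has at most one minimizer in Ω. -/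
open Matrix

/-!
Take `M₀ ≠ M₁` in `{M | M ≻ 0, 2W - M ≻ 0}`. A congruence `M ↦ Cᵀ M C` sends `M₀` to `1` and
`M₁` to a diagonal matrix, hence every `(1 - t) M₀ + t M₁` to a diagonal matrix `diag e(t)` with
`e(t)` affine in `t`. Up to the constant `log (det C)²`, `Φ₀` then becomes
`∑ₖ (wₖ / eₖ + log eₖ)` with `w` the diagonal of `Cᵀ W C`. The map `u ↦ w / u + log u` has second
derivative `(2w - u) / u³`, so it is strictly convex on `(0, 2w)`, and `M ≻ 0`, `2W - M ≻ 0` put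
`eₖ` in that interval. Since `e(0) ≠ e(1)`, `Φ₀` is strictly convex on the matrix domain. The
rank condition makes `p ↦ M_p` an injective affine map, so this pulls back to `Ω`.
-/

open Topology in
theorem strictConvexOn_div_add_log (w : ℝ) :
    StrictConvexOn ℝ (Set.Ioo 0 (2 * w)) (fun u => w / u + Real.log u) := by
  have hf' {u : ℝ} (hu : u ≠ 0) :
      HasDerivAt (fun u => w / u + Real.log u) ((u - w) / u ^ 2) u :=
    (((hasDerivAt_const u w).fun_div (hasDerivAt_id' u) hu).add
      (Real.hasDerivAt_log hu)).congr_deriv (by field_simp; ring)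
  have hf'' {u : ℝ} (hu : u ≠ 0) :
      HasDerivAt (fun u => (u - w) / u ^ 2) ((2 * w - u) / u ^ 3) u :=
    (((hasDerivAt_id' u).sub_const w).fun_div (hasDerivAt_pow 2 u)
      (pow_ne_zero 2 hu)).congr_deriv (by field_simp; ring)
  refine strictConvexOn_of_deriv2_pos' (convex_Ioo _ _)
    (fun u hu => (hf' hu.1.ne').continuousAt.continuousWithinAt) fun u hu => ?_
  have hderiv : deriv (fun u => w / u + Real.log u) =ᶠ[𝓝 u] fun u => (u - w) / u ^ 2 :=
    (eventually_ne_nhds hu.1.ne').mono fun v hv => (hf' hv).deriv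
  rw [Function.iterate_succ_apply, Function.iterate_one, hderiv.deriv_eq, (hf'' hu.1.ne').deriv]
  exact div_pos (by linarith [hu.2]) (pow_pos hu.1 3)

theorem StrictConvexOn.sum_univ_pi {ι : Type*} [Fintype ι] {E : ι → Type*}
    [∀ i, AddCommGroup (E i)] [∀ i, Module ℝ (E i)] {s : ∀ i, Set (E i)} {f : ∀ i, E i → ℝ}
    (hf : ∀ i, StrictConvexOn ℝ (s i) (f i)) :
    StrictConvexOn ℝ (Set.univ.pi s) (fun x => ∑ i, f i (x i)) := by
  refine ⟨convex_pi fun i _ => (hf i).1, fun x hx y hy hxy a b ha hb hab => ?_⟩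
  obtain ⟨j, hj⟩ := Function.ne_iff.mp hxy
  rw [Set.mem_univ_pi] at hx hy
  calc ∑ i, f i ((a • x + b • y) i) < ∑ i, (a • f i (x i) + b • f i (y i)) :=
        Finset.sum_lt_sum (fun i _ => (hf i).convexOn.2 (hx i) (hy i) ha.le hb.le hab)
          ⟨j, Finset.mem_univ j, (hf j).2 (hx j) (hy j) hj ha hb hab⟩
    _ = a • ∑ i, f i (x i) + b • ∑ i, f i (y i) := by
        rw [Finset.sum_add_distrib, Finset.smul_sum, Finset.smul_sum]

theorem StrictConvexOn.comp_affineMap_of_injective {𝕜 E F β : Type*} [Field 𝕜] [LinearOrder 𝕜]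
    [IsStrictOrderedRing 𝕜] [AddCommGroup E] [Module 𝕜 E] [AddCommGroup F] [Module 𝕜 F]
    [AddCommMonoid β] [PartialOrder β] [SMul 𝕜 β] {f : F → β} {s : Set F}
    (hf : StrictConvexOn 𝕜 s f) (g : E →ᵃ[𝕜] F) (hg : Function.Injective g) :
    StrictConvexOn 𝕜 (g ⁻¹' s) (f ∘ g) :=
  ⟨hf.1.affine_preimage g, fun x hx y hy hxy a b ha hb hab => by
    simpa only [Function.comp_apply, Convex.combo_affine_apply hab] using
      hf.2 hx hy (hg.ne hxy) ha hb hab⟩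

namespace Matrix

theorem mulVec_injective_of_rank_eq_card {K m n : Type*} [Field K] [Fintype m] [Fintype n]
    {A : Matrix m n K} (h : A.rank = Fintype.card n) : Function.Injective A.mulVec := by
  rw [mulVec_injective_iff, linearIndependent_iff_card_eq_finrank_span, ← h,
    rank_eq_finrank_span_cols]
  rfl

section PosDef

open scoped ComplexOrder

variable {ι 𝕜 : Type*} [RCLike 𝕜]

theorem convex_setOf_posDef : Convex ℝ {M : Matrix ι ι 𝕜 | M.PosDef} := by
  intro X hX Y hY a b ha hb hab
  rcases ha.eq_or_lt with rfl | ha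
  · rw [zero_add] at hab
    simpa [hab] using hY
  rcases hb.eq_or_lt with rfl | hb
  · rw [add_zero] at hab
    simpa [hab] using hX
  exact (hX.smul ha).add (hY.smul hb)

theorem convex_setOf_posDef_sub (A : Matrix ι ι 𝕜) : Convex ℝ {M | (A - M).PosDef} := by
  intro X hX Y hY a b ha hb hab
  have h := convex_setOf_posDef hX hY ha hb hab
  rwa [Set.mem_ofPred_eq, smul_sub, smul_sub, sub_add_sub_comm, Convex.combo_self hab] at h

end PosDef

variable {ι : Type*} [Fintype ι] [DecidableEq ι]

open scoped MatrixOrder in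
theorem PosDef.exists_conjTranspose_mul_mul_eq_one {A : Matrix ι ι ℝ} (hA : A.PosDef) :
    ∃ R : Matrix ι ι ℝ, IsUnit R ∧ Rᴴ * A * R = 1 := by
  obtain ⟨Y, hY, rfl⟩ := CStarAlgebra.isStrictlyPositive_iff_eq_star_mul_self.mp
    hA.isStrictlyPositive
  lift Y to (Matrix ι ι ℝ)ˣ using hY
  refine ⟨↑Y⁻¹, Units.isUnit _, ?_⟩
  calc (↑Y⁻¹ : Matrix ι ι ℝ)ᴴ * (star ↑Y * ↑Y) * ↑Y⁻¹
      = (↑Y * ↑Y⁻¹ : Matrix ι ι ℝ)ᴴ * (↑Y * ↑Y⁻¹) := by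
        simp only [star_eq_conjTranspose, conjTranspose_mul, mul_assoc]
    _ = 1 := by simp

theorem PosDef.exists_conj_eq_one_and_diagonal {A B : Matrix ι ι ℝ} (hA : A.PosDef)
    (hB : B.IsHermitian) :
    ∃ (C : Matrix ι ι ℝ) (d : ι → ℝ), IsUnit C ∧ Cᴴ * A * C = 1 ∧ Cᴴ * B * C = diagonal d := by
  obtain ⟨R, hR, hRA⟩ := hA.exists_conjTranspose_mul_mul_eq_one
  have hB' : (Rᴴ * B * R).IsHermitian := isHermitian_conjTranspose_mul_mul R hB
  have hconj (U X : Matrix ι ι ℝ) : (R * U)ᴴ * X * (R * U) = star U * (Rᴴ * X * R) * U := by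
    simp only [star_eq_conjTranspose, conjTranspose_mul, mul_assoc]
  refine ⟨R * hB'.eigenvectorUnitary, hB'.eigenvalues,
    hR.mul (Unitary.isUnit_coe (U := hB'.eigenvectorUnitary)), ?_, ?_⟩
  · rw [hconj, hRA, mul_one, Unitary.coe_star_mul_self]
  · rw [hconj]
    simpa [Unitary.conjStarAlgAut_star_apply] using
      hB'.conjStarAlgAut_star_eigenvectorUnitary

/-- `Φ₀` as a function of the covariance matrix `M = M_p`. -/
noncomputable def negLogLik (W M : Matrix ι ι ℝ) : ℝ := (M⁻¹ * W).trace + Real.log |M.det|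

theorem negLogLik_conj {W M C : Matrix ι ι ℝ} (hM : M.det ≠ 0) (hC : IsUnit C) :
    negLogLik (Cᴴ * W * C) (Cᴴ * M * C) = negLogLik W M + Real.log (C.det ^ 2) := by
  have hC' : IsUnit C.det := (isUnit_iff_isUnit_det C).mp hC
  have hCd : C.det ≠ 0 := hC'.ne_zero
  have htrace : ((Cᴴ * M * C)⁻¹ * (Cᴴ * W * C)).trace = (M⁻¹ * W).trace := by
    have hCH : IsUnit Cᴴ.det := (isUnit_iff_isUnit_det _).mp hC.star
    have hconj : (Cᴴ * M * C)⁻¹ * (Cᴴ * W * C) = C⁻¹ * (M⁻¹ * W) * C := by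
      simp only [mul_inv_rev, mul_assoc, nonsing_inv_mul_cancel_left _ _ hCH]
    rw [hconj, trace_mul_cycle, mul_nonsing_inv _ hC', one_mul]
  have hdet : (Cᴴ * M * C).det = M.det * C.det ^ 2 := by
    rw [det_mul, det_mul, det_conjTranspose, star_trivial]
    ring
  rw [negLogLik, negLogLik, htrace, hdet, abs_mul, abs_of_pos (by positivity : 0 < C.det ^ 2),
    Real.log_mul (abs_ne_zero.mpr hM) (by positivity), add_assoc]

theorem negLogLik_diagonal (W : Matrix ι ι ℝ) {d : ι → ℝ} (hd : ∀ k, d k ≠ 0) :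
    negLogLik W (diagonal d) = ∑ k, (W k k / d k + Real.log (d k)) := by
  have hinv : (diagonal d)⁻¹ = diagonal d⁻¹ := by
    refine inv_eq_left_inv ?_
    rw [diagonal_mul_diagonal, ← diagonal_one]
    exact congrArg diagonal (funext fun k => inv_mul_cancel₀ (hd k))
  rw [negLogLik, hinv, det_diagonal, Real.log_abs, Real.log_prod fun k _ => hd k,
    Finset.sum_add_distrib]
  simp [trace, diagonal_mul, div_eq_inv_mul]

theorem PosDef.pos_of_conj_eq_diagonal {M C : Matrix ι ι ℝ} {e : ι → ℝ} (hM : M.PosDef)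
    (hC : IsUnit C) (hMe : Cᴴ * M * C = diagonal e) (k : ι) : 0 < e k := by
  have := (hM.conjTranspose_mul_mul_same (mulVec_injective_iff_isUnit.mpr hC)).diag_pos (i := k)
  rwa [hMe, diagonal_apply_eq] at this

theorem lt_two_mul_of_conj_eq_diagonal {W M C : Matrix ι ι ℝ} {e : ι → ℝ}
    (hM : ((2 : ℝ) • W - M).PosDef) (hC : IsUnit C) (hMe : Cᴴ * M * C = diagonal e) (k : ι) :
    e k < 2 * (Cᴴ * W * C) k k := by
  have := (hM.conjTranspose_mul_mul_same (mulVec_injective_iff_isUnit.mpr hC)).diag_pos (i := k)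
  rw [mul_sub, sub_mul, hMe, Matrix.mul_smul, Matrix.smul_mul] at this
  simpa using this

theorem negLogLik_eq_sum_of_conj_eq_diagonal {W M C : Matrix ι ι ℝ} {e : ι → ℝ} (hM : M.PosDef)
    (hC : IsUnit C) (hMe : Cᴴ * M * C = diagonal e) :
    negLogLik W M = ∑ k, ((Cᴴ * W * C) k k / e k + Real.log (e k)) - Real.log (C.det ^ 2) := by
  rw [eq_sub_iff_add_eq, ← negLogLik_conj hM.det_pos.ne' hC, hMe,
    negLogLik_diagonal _ fun k => (hM.pos_of_conj_eq_diagonal hC hMe k).ne']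

theorem strictConvexOn_negLogLik (W : Matrix ι ι ℝ) :
    StrictConvexOn ℝ {M | M.PosDef ∧ ((2 : ℝ) • W - M).PosDef} (negLogLik W) := by
  have hconv : Convex ℝ {M | M.PosDef ∧ ((2 : ℝ) • W - M).PosDef} :=
    (convex_setOf_posDef (𝕜 := ℝ)).inter (convex_setOf_posDef_sub _)
  refine ⟨hconv, fun M₀ hM₀ M₁ hM₁ hne a b ha hb hab => ?_⟩
  obtain ⟨C, d, hC, hC₀, hC₁⟩ := hM₀.1.exists_conj_eq_one_and_diagonal hM₁.1.1
  have hone : diagonal (1 : ι → ℝ) = 1 := diagonal_one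
  replace hC₀ : Cᴴ * M₀ * C = diagonal 1 := hC₀.trans hone.symm
  have hcomb : Cᴴ * (a • M₀ + b • M₁) * C = diagonal (a • 1 + b • d) := by
    rw [mul_add, add_mul, Matrix.mul_smul, Matrix.smul_mul, Matrix.mul_smul, Matrix.smul_mul, hC₀,
      hC₁, ← diagonal_smul, ← diagonal_smul, diagonal_add]
    rfl
  have hd : (1 : ι → ℝ) ≠ d := by
    rintro rfl
    rw [← hC₀] at hC₁
    exact hne (hC.star.mul_left_cancel (hC.mul_right_cancel hC₁)).symm
  have hmem {M : Matrix ι ι ℝ} {e : ι → ℝ} (hM : M.PosDef ∧ ((2 : ℝ) • W - M).PosDef)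
      (hMe : Cᴴ * M * C = diagonal e) :
      e ∈ Set.univ.pi fun k => Set.Ioo 0 (2 * (Cᴴ * W * C) k k) := fun k _ =>
    ⟨hM.1.pos_of_conj_eq_diagonal hC hMe k, lt_two_mul_of_conj_eq_diagonal hM.2 hC hMe k⟩
  have hF := (StrictConvexOn.sum_univ_pi fun k =>
    strictConvexOn_div_add_log ((Cᴴ * W * C) k k)).2 (hmem hM₀ hC₀) (hmem hM₁ hC₁) hd ha hb hab
  rw [negLogLik_eq_sum_of_conj_eq_diagonal (hconv hM₀ hM₁ ha.le hb.le hab).1 hC hcomb,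
    negLogLik_eq_sum_of_conj_eq_diagonal hM₀.1 hC hC₀,
    negLogLik_eq_sum_of_conj_eq_diagonal hM₁.1 hC hC₁]
  simp only [smul_eq_mul] at hF ⊢
  linear_combination hF + Real.log (C.det ^ 2) * hab

end Matrix

section Covariance

variable {m n : ℕ}

noncomputable def covMatAffineMap (S : Matrix (Fin m) (Fin n) ℝ) (Sig : Matrix (Fin m) (Fin m) ℝ) :
    (Fin n → ℝ) →ᵃ[ℝ] Matrix (Fin m) (Fin m) ℝ :=
  (mulRightLinearMap (Fin m) ℝ Sᵀ ∘ₗ mulLeftLinearMap (Fin n) ℝ S ∘ₗ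
    diagonalLinearMap (Fin n) ℝ ℝ).toAffineMap + AffineMap.const ℝ _ Sig

theorem mul_diagonal_mul_transpose_apply (S : Matrix (Fin m) (Fin n) ℝ) (p : Fin n → ℝ)
    (i j : Fin m) : (S * diagonal p * Sᵀ) i j = (pairProdMatrix S *ᵥ p) (i, j) := by
  rw [mul_apply]
  simp only [mul_diagonal, transpose_apply, mulVec, dotProduct, pairProdMatrix, of_apply]
  exact Finset.sum_congr rfl fun k _ => by ring

theorem covMat_injective {S : Matrix (Fin m) (Fin n) ℝ} (Sig : Matrix (Fin m) (Fin m) ℝ)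
    (hrank : (pairProdMatrix S).rank = n) : Function.Injective (covMat S Sig) := by
  intro p q h
  refine Matrix.mulVec_injective_of_rank_eq_card (hrank.trans (Fintype.card_fin n).symm)
    (funext fun ij => ?_)
  rw [← mul_diagonal_mul_transpose_apply, ← mul_diagonal_mul_transpose_apply,
    add_right_cancel h]

end Covariance

theorem stmt5_general {m n : ℕ} (S : Matrix (Fin m) (Fin n) ℝ)
    (Sig W : Matrix (Fin m) (Fin m) ℝ)
    (hrank : (pairProdMatrix S).rank = n) :
    Convex ℝ {p : Fin n → ℝ |
        (covMat S Sig p).PosDef ∧ ((2 : ℝ) • W - covMat S Sig p).PosDef} ∧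
      StrictConvexOn ℝ
        {p : Fin n → ℝ |
          (covMat S Sig p).PosDef ∧ ((2 : ℝ) • W - covMat S Sig p).PosDef}
        (fun p => ((covMat S Sig p)⁻¹ * W).trace +
          Real.log |(covMat S Sig p).det|) ∧
      ∀ p q : Fin n → ℝ,
        p ∈ {p : Fin n → ℝ |
          (covMat S Sig p).PosDef ∧ ((2 : ℝ) • W - covMat S Sig p).PosDef} →
        q ∈ {p : Fin n → ℝ |
          (covMat S Sig p).PosDef ∧ ((2 : ℝ) • W - covMat S Sig p).PosDef} →
        IsMinOn (fun p => ((covMat S Sig p)⁻¹ * W).trace +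
            Real.log |(covMat S Sig p).det|)
          {p : Fin n → ℝ |
            (covMat S Sig p).PosDef ∧ ((2 : ℝ) • W - covMat S Sig p).PosDef} p →
        IsMinOn (fun p => ((covMat S Sig p)⁻¹ * W).trace +
            Real.log |(covMat S Sig p).det|)
          {p : Fin n → ℝ |
            (covMat S Sig p).PosDef ∧ ((2 : ℝ) • W - covMat S Sig p).PosDef} q →
        p = q := by
  have hΦ := (Matrix.strictConvexOn_negLogLik W).comp_affineMap_of_injective
    (covMatAffineMap S Sig) (covMat_injective Sig hrank)
  exact ⟨hΦ.1, hΦ, fun p q hp hq hp_min hq_min => hΦ.eq_of_isMinOn hp_min hq_min hp hq⟩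

/-- If `rank S̄̄ = n`, `Σ` is symmetric and `W` is symmetric,
then on `Ω = {p : M_p ≻ 0 and 2W − M_p ≻ 0}` the objective
`Φ₀(p) = trace(M_p⁻¹ W) + log|det M_p|` is strictly convex (and `Ω` is a
convex set); in particular `Φ₀` has at most one minimizer in `Ω`. -/
theorem stmt5 {m n : ℕ} (S : Matrix (Fin m) (Fin n) ℝ)
    (Sig W : Matrix (Fin m) (Fin m) ℝ)
    (hrank : (pairProdMatrix S).rank = n)
    (hSig : Sig.IsSymm) (hW : W.IsSymm) :
    Convex ℝ {p : Fin n → ℝ |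
        (covMat S Sig p).PosDef ∧ ((2 : ℝ) • W - covMat S Sig p).PosDef} ∧
      StrictConvexOn ℝ
        {p : Fin n → ℝ |
          (covMat S Sig p).PosDef ∧ ((2 : ℝ) • W - covMat S Sig p).PosDef}
        (fun p => ((covMat S Sig p)⁻¹ * W).trace +
          Real.log |(covMat S Sig p).det|) ∧
      ∀ p q : Fin n → ℝ,
        p ∈ {p : Fin n → ℝ |
          (covMat S Sig p).PosDef ∧ ((2 : ℝ) • W - covMat S Sig p).PosDef} →
        q ∈ {p : Fin n → ℝ |
          (covMat S Sig p).PosDef ∧ ((2 : ℝ) • W - covMat S Sig p).PosDef} →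
        IsMinOn (fun p => ((covMat S Sig p)⁻¹ * W).trace +
            Real.log |(covMat S Sig p).det|)
          {p : Fin n → ℝ |
            (covMat S Sig p).PosDef ∧ ((2 : ℝ) • W - covMat S Sig p).PosDef} p →
        IsMinOn (fun p => ((covMat S Sig p)⁻¹ * W).trace +
            Real.log |(covMat S Sig p).det|)
          {p : Fin n → ℝ |
            (covMat S Sig p).PosDef ∧ ((2 : ℝ) • W - covMat S Sig p).PosDef} q →
        p = q :=
  stmt5_general S Sig W hrank
end

section
/- Let S be a real m×n matrix, Σ a symmetric m×m matrix, μ, Y₁,…,Y_L ∈ ℝ^m, W = (1/L)·Σᵢ(Yᵢ−μ)(Yᵢ−μ)ᵀ, M_p = S·diag(p)·Sᵀ + Σ, and Φ(p) = (1/L)·Σᵢ(Yᵢ−μ)ᵀM_p⁻¹(Yᵢ−μ) + log|det M_p|. If p₀ ∈ ℝⁿ is such that M_{p₀} is positive definite, then Φ is differentiable at p₀ and its directional derivative in direction a ∈ ℝⁿ equals trace(Sᵀ·M_{p₀}⁻¹·(I − W·M_{p₀}⁻¹)·S·diag(a)). -/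
/-!
Write `Φ(p) = tr(M_p⁻¹ W) + log |det M_p|`, i.e. `Φ` is the affine map `p ↦ M_p` followed by
`F(M) = tr(M⁻¹ W) + log |det M|`. By Jacobi's formula `d(log |det|)_A = tr(A⁻¹ ·)`, and
`d(M ↦ M⁻¹)_A H = -A⁻¹ H A⁻¹`, so `dF_A H = tr(A⁻¹ (1 - W A⁻¹) H)`. Taking `H = S diag(a) Sᵀ`
and cycling the trace gives the formula. Jacobi's formula itself is reduced to `A = 1`, where
`det (1 + t H)` is a polynomial in `t` with linear coefficient `tr H`.
-/

open Matrix

/-- The empirical covariance `W = (1/L)·Σᵢ (Yᵢ−μ)(Yᵢ−μ)ᵀ`. -/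
noncomputable def empCov {m : ℕ} (L : ℕ) (μ : Fin m → ℝ)
    (Y : Fin L → Fin m → ℝ) : Matrix (Fin m) (Fin m) ℝ :=
  (1 / (L : ℝ)) • ∑ i, Matrix.of fun a b => (Y i a - μ a) * (Y i b - μ b)

-- Any norm would do; this one makes square matrices a complete normed algebra.
attribute [local instance] Matrix.linftyOpNormedAddCommGroup Matrix.linftyOpNormedSpace
  Matrix.linftyOpNormedRing Matrix.linftyOpNormedAlgebra

namespace Matrix

section JacobiFormula

variable {𝕜 ι : Type*} [RCLike 𝕜] [Fintype ι] [DecidableEq ι]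

variable (𝕜 ι) in
noncomputable def traceCLM : Matrix ι ι 𝕜 →L[𝕜] 𝕜 :=
  LinearMap.toContinuousLinearMap (traceLinearMap ι 𝕜 𝕜)

theorem differentiable_det : Differentiable 𝕜 (det : Matrix ι ι 𝕜 → 𝕜) := by
  have : (det : Matrix ι ι 𝕜 → 𝕜) = fun M => ∑ σ : Equiv.Perm ι, σ.sign • ∏ i, M (σ i) i :=
    funext det_apply
  rw [this]
  fun_prop

open Polynomial in
theorem hasFDerivAt_det_one : HasFDerivAt det (traceCLM 𝕜 ι) 1 := by
  have hD := (differentiable_det (𝕜 := 𝕜) (ι := ι) 1).hasFDerivAt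
  convert hD using 1
  refine ContinuousLinearMap.ext fun H => ?_
  have hline : HasDerivAt (fun t : 𝕜 => det (1 + t • H)) (fderiv 𝕜 det 1 H) 0 := by
    have := hD.comp_hasDerivAt_of_eq (0 : 𝕜) (((hasDerivAt_id' 0).smul_const H).const_add 1)
      (by simp)
    rw [one_smul] at this
    exact this
  have hpoly : HasDerivAt (fun t : 𝕜 => det (1 + t • H)) (trace H) 0 := by
    have := (det (1 + (X : 𝕜[X]) • H.map C)).hasDerivAt 0
    rw [derivative_det_one_add_X_smul] at this
    convert this using 1
    funext t
    simp [eval_det, ← smul_eq_mul_diagonal]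
  exact hpoly.unique hline

theorem hasFDerivAt_det {A : Matrix ι ι 𝕜} (hA : A.det ≠ 0) :
    HasFDerivAt det (A.det • (traceCLM 𝕜 ι).comp (ContinuousLinearMap.mul 𝕜 _ A⁻¹)) A := by
  have hdet (X : Matrix ι ι 𝕜) : X.det = A.det * (A⁻¹ * X).det := by
    rw [det_mul, det_nonsing_inv, Ring.inverse_eq_inv', mul_inv_cancel_left₀ hA]
  have hAA : ContinuousLinearMap.mul 𝕜 _ A⁻¹ A = 1 := nonsing_inv_mul A (isUnit_iff_ne_zero.2 hA)
  have := ((hAA ▸ hasFDerivAt_det_one).const_mul A.det).comp A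
    (ContinuousLinearMap.mul 𝕜 _ A⁻¹).hasFDerivAt
  exact this.congr_of_eventuallyEq (.of_forall hdet)

theorem hasFDerivAt_inv {A : Matrix ι ι 𝕜} (hA : A.det ≠ 0) :
    HasFDerivAt Inv.inv (-ContinuousLinearMap.mulLeftRight 𝕜 _ A⁻¹ A⁻¹) A := by
  have hAu : IsUnit A := (isUnit_iff_isUnit_det A).2 (isUnit_iff_ne_zero.2 hA)
  have := hasFDerivAt_ringInverse (𝕜 := 𝕜) hAu.unit
  simp only [coe_units_inv, IsUnit.unit_spec] at this
  exact this.congr_of_eventuallyEq (.of_forall nonsing_inv_eq_ringInverse)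

end JacobiFormula

section LogLikelihood

variable {ι : Type*} [Fintype ι] [DecidableEq ι]

theorem hasFDerivAt_log_abs_det {A : Matrix ι ι ℝ} (hA : A.det ≠ 0) :
    HasFDerivAt (fun M => Real.log |M.det|)
      ((traceCLM ℝ ι).comp (ContinuousLinearMap.mul ℝ _ A⁻¹)) A := by
  have := (Real.hasDerivAt_log hA).comp_hasFDerivAt A (hasFDerivAt_det hA)
  simp only [Real.log_abs, smul_smul, inv_mul_cancel₀ hA, one_smul] at this ⊢
  exact this

theorem hasFDerivAt_trace_inv_mul_add_log_abs_det (W : Matrix ι ι ℝ) {A : Matrix ι ι ℝ}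
    (hA : A.det ≠ 0) :
    HasFDerivAt (fun M => (M⁻¹ * W).trace + Real.log |M.det|)
      ((traceCLM ℝ ι).comp (ContinuousLinearMap.mul ℝ _ (A⁻¹ * (1 - W * A⁻¹)))) A := by
  have hquad := ((traceCLM ℝ ι).hasFDerivAt.comp A ((hasFDerivAt_inv (𝕜 := ℝ) hA).mul_const' W))
  refine (hquad.add (hasFDerivAt_log_abs_det hA)).congr_fderiv
    (ContinuousLinearMap.ext fun H => ?_)
  change (-(A⁻¹ * H * A⁻¹) * W).trace + (A⁻¹ * H).trace = (A⁻¹ * (1 - W * A⁻¹) * H).trace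
  rw [Matrix.neg_mul, trace_neg, Matrix.mul_sub, Matrix.mul_one, Matrix.sub_mul, trace_sub,
    Matrix.mul_assoc (A⁻¹ * H), trace_mul_comm]
  simp only [Matrix.mul_assoc]
  ring

end LogLikelihood

theorem dotProduct_mulVec_eq_trace_mul_vecMulVec {R ι : Type*} [CommSemiring R] [Fintype ι]
    (x : ι → R) (N : Matrix ι ι R) : x ⬝ᵥ (N *ᵥ x) = (N * vecMulVec x x).trace := by
  rw [mul_vecMulVec, trace_vecMulVec, dotProduct_comm]

noncomputable def mulDiagonalMulTransposeCLM {ι κ : Type*} [Fintype ι] [DecidableEq ι]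
    [Fintype κ] (S : Matrix κ ι ℝ) : (ι → ℝ) →L[ℝ] Matrix κ κ ℝ :=
  LinearMap.toContinuousLinearMap
    (mulRightLinearMap κ ℝ Sᵀ ∘ₗ mulLeftLinearMap ι ℝ S ∘ₗ diagonalLinearMap ι ℝ ℝ)

end Matrix

section GaussianLikelihood

variable {m n : ℕ} (S : Matrix (Fin m) (Fin n) ℝ) (Sig : Matrix (Fin m) (Fin m) ℝ)

theorem mlObjective_eq_trace_add_log_abs_det (L : ℕ) (μ : Fin m → ℝ) (Y : Fin L → Fin m → ℝ)
    (p : Fin n → ℝ) :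
    mlObjective S Sig L μ Y p =
      ((covMat S Sig p)⁻¹ * empCov L μ Y).trace + Real.log |(covMat S Sig p).det| := by
  have hW : empCov L μ Y = (1 / (L : ℝ)) • ∑ i, vecMulVec (Y i - μ) (Y i - μ) := rfl
  rw [hW, Matrix.mul_smul, trace_smul, Matrix.mul_sum, trace_sum, mlObjective, smul_eq_mul]
  simp only [dotProduct_mulVec_eq_trace_mul_vecMulVec]

theorem hasFDerivAt_covMat (p : Fin n → ℝ) : HasFDerivAt (covMat S Sig) (mulDiagonalMulTransposeCLM S) p :=
  (mulDiagonalMulTransposeCLM S).hasFDerivAt.add_const Sig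

end GaussianLikelihood

theorem stmt6_general {m n : ℕ} (S : Matrix (Fin m) (Fin n) ℝ)
    (Sig : Matrix (Fin m) (Fin m) ℝ)
    (L : ℕ) (μ : Fin m → ℝ) (Y : Fin L → Fin m → ℝ)
    (p₀ : Fin n → ℝ) (hpos : (covMat S Sig p₀).PosDef) :
    ∃ f : (Fin n → ℝ) →L[ℝ] ℝ,
      HasFDerivAt (mlObjective S Sig L μ Y) f p₀ ∧
        ∀ a : Fin n → ℝ,
          f a =
            (Sᵀ * (covMat S Sig p₀)⁻¹ *
              (1 - empCov L μ Y * (covMat S Sig p₀)⁻¹) * S *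
              Matrix.diagonal a).trace := by
  have hA : (covMat S Sig p₀).det ≠ 0 := hpos.det_pos.ne'
  refine ⟨_, ((hasFDerivAt_trace_inv_mul_add_log_abs_det (empCov L μ Y) hA).comp p₀
    (hasFDerivAt_covMat S Sig p₀)).congr_of_eventuallyEq
      (.of_forall (mlObjective_eq_trace_add_log_abs_det S Sig L μ Y)), fun a => ?_⟩
  change ((covMat S Sig p₀)⁻¹ * (1 - empCov L μ Y * (covMat S Sig p₀)⁻¹) *
    (S * diagonal a * Sᵀ)).trace = _
  rw [← Matrix.mul_assoc, ← Matrix.mul_assoc, trace_mul_comm]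
  simp only [Matrix.mul_assoc]

/-- If `M_{p₀}` is positive definite then `Φ` is
differentiable at `p₀`, and its directional derivative in direction `a`
equals `trace (Sᵀ M_{p₀}⁻¹ (I − W M_{p₀}⁻¹) S diag(a))`. -/
theorem stmt6 {m n : ℕ} (S : Matrix (Fin m) (Fin n) ℝ)
    (Sig : Matrix (Fin m) (Fin m) ℝ) (hSig : Sig.IsSymm)
    (L : ℕ) (μ : Fin m → ℝ) (Y : Fin L → Fin m → ℝ)
    (p₀ : Fin n → ℝ) (hpos : (covMat S Sig p₀).PosDef) :
    ∃ f : (Fin n → ℝ) →L[ℝ] ℝ,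
      HasFDerivAt (mlObjective S Sig L μ Y) f p₀ ∧
        ∀ a : Fin n → ℝ,
          f a =
            (Sᵀ * (covMat S Sig p₀)⁻¹ *
              (1 - empCov L μ Y * (covMat S Sig p₀)⁻¹) * S *
              Matrix.diagonal a).trace :=
  stmt6_general S Sig L μ Y p₀ hpos
end

section
/- Let S be a real m×n matrix, Σ a symmetric m×m matrix, μ, Y₁,…,Y_L ∈ ℝ^m, W = (1/L)·Σᵢ(Yᵢ−μ)(Yᵢ−μ)ᵀ, M_p = S·diag(p)·Sᵀ + Σ, and Φ(p) = (1/L)·Σᵢ(Yᵢ−μ)ᵀM_p⁻¹(Yᵢ−μ) + log|det M_p|. If p₀ ∈ ℝⁿ is a local minimum of Φ and M_{p₀} is positive definite, then every diagonal entry of the n×n matrix Sᵀ·M_{p₀}⁻¹·(I − W·M_{p₀}⁻¹)·S is zero. -/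
open Matrix

/-! Restrict `Φ` to the line `t ↦ p₀ + t • eᵢ`. Along it `M_p` moves as `M + t • sᵢ sᵢᵀ`, with `sᵢ` the
`i`-th column of `S`, and `Φ = tr (M_p⁻¹ W) + log |det M_p|`. Differentiating with
`d(M⁻¹) = -M⁻¹ dM M⁻¹` and `d log |det M| = tr (M⁻¹ dM)` gives the derivative
`tr (M⁻¹ (I - W M⁻¹) sᵢ sᵢᵀ) = (Sᵀ M⁻¹ (I - W M⁻¹) S)ᵢᵢ` at `t = 0`, which vanishes at a local
minimum. -/

open Polynomial

section QuadraticForm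

variable {R ι κ : Type*} [CommSemiring R] [Fintype ι]

theorem Matrix.dotProduct_mulVec_self_eq_trace (N : Matrix ι ι R) (x : ι → R) :
    x ⬝ᵥ (N *ᵥ x) = trace (N * vecMulVec x x) := by
  rw [mul_vecMulVec, trace_vecMulVec, dotProduct_comm]

theorem Matrix.transpose_mul_mul_apply_self (S : Matrix ι κ R) (X : Matrix ι ι R) (k : κ) :
    (Sᵀ * X * S) k k = trace (X * vecMulVec (S.col k) (S.col k)) := by
  rw [← dotProduct_mulVec_self_eq_trace, Matrix.mul_assoc, mul_apply, dotProduct]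
  simp only [transpose_apply, col_apply, mulVec, mul_apply, dotProduct]

end QuadraticForm

section MatrixCalculus

variable {ι : Type*} [Fintype ι] [DecidableEq ι]

theorem Matrix.hasDerivAt_det_one_add_smul (B : Matrix ι ι ℝ) :
    HasDerivAt (fun t : ℝ => det (1 + t • B)) (trace B) 0 := by
  have hpoly : (fun t : ℝ => det (1 + t • B)) =
      fun t => (det (1 + (X : ℝ[X]) • B.map C)).eval t := by
    funext t
    simp [eval_det, ← smul_eq_mul_diagonal]
  rw [hpoly, ← derivative_det_one_add_X_smul]
  exact Polynomial.hasDerivAt _ 0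

theorem Matrix.hasDerivAt_log_abs_det_add_smul {M : Matrix ι ι ℝ} (hM : M.det ≠ 0)
    (A : Matrix ι ι ℝ) :
    HasDerivAt (fun t : ℝ => Real.log |det (M + t • A)|) (trace (M⁻¹ * A)) 0 := by
  have hfactor : ∀ t : ℝ, M + t • A = M * (1 + t • (M⁻¹ * A)) := fun t => by
    rw [Matrix.mul_add, Matrix.mul_one, Matrix.mul_smul, ← Matrix.mul_assoc,
      mul_nonsing_inv _ hM.isUnit, Matrix.one_mul]
  have hdet : HasDerivAt (fun t : ℝ => det (M + t • A)) (det M * trace (M⁻¹ * A)) 0 := by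
    simpa only [hfactor, det_mul] using (hasDerivAt_det_one_add_smul (M⁻¹ * A)).const_mul (det M)
  simp_rw [Real.log_abs]
  convert hdet.log (by simpa using hM) using 1
  rw [zero_smul, add_zero]
  field_simp

section NormedRing

-- `hasFDerivAt_ringInverse` needs a normed ring; every norm on matrices induces the product
-- topology, so the choice is immaterial.
attribute [local instance] Matrix.linftyOpNormedRing Matrix.linftyOpNormedAlgebra

theorem Matrix.hasDerivAt_inv_add_smul {M : Matrix ι ι ℝ} (hM : IsUnit M) (A : Matrix ι ι ℝ) :
    HasDerivAt (fun t : ℝ => (M + t • A)⁻¹) (-(M⁻¹ * A * M⁻¹)) 0 := by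
  have hinv : HasFDerivAt Ring.inverse
      (-(ContinuousLinearMap.mulLeftRight ℝ _ M⁻¹ M⁻¹)) (M + (0 : ℝ) • A) := by
    have h := hasFDerivAt_ringInverse (𝕜 := ℝ) hM.unit
    rw [coe_units_inv, hM.unit_spec] at h
    simpa using h
  have hline : HasDerivAt (fun t : ℝ => M + t • A) A 0 :=
    (((hasDerivAt_id (0 : ℝ)).smul_const A).const_add M).congr_deriv (by simp)
  have hfun : (fun t : ℝ => (M + t • A)⁻¹) = Ring.inverse ∘ fun t : ℝ => M + t • A := by
    funext t
    exact nonsing_inv_eq_ringInverse _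
  rw [hfun]
  exact (hinv.comp_hasDerivAt 0 hline).congr_deriv (by simp)

theorem Matrix.hasDerivAt_trace_inv_add_smul_mul {M : Matrix ι ι ℝ} (hM : IsUnit M)
    (A W : Matrix ι ι ℝ) :
    HasDerivAt (fun t : ℝ => trace ((M + t • A)⁻¹ * W)) (-trace (M⁻¹ * A * M⁻¹ * W)) 0 := by
  let traceMulRight : Matrix ι ι ℝ →L[ℝ] ℝ :=
    LinearMap.toContinuousLinearMap (traceLinearMap ι ℝ ℝ ∘ₗ LinearMap.mulRight ℝ W)
  exact (traceMulRight.hasFDerivAt.comp_hasDerivAt 0 (hasDerivAt_inv_add_smul hM A)).congr_deriv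
    (by change trace (-(M⁻¹ * A * M⁻¹) * W) = _; rw [Matrix.neg_mul, trace_neg])

end NormedRing

theorem Matrix.hasDerivAt_trace_inv_mul_add_log_abs_det {M : Matrix ι ι ℝ} (hM : M.det ≠ 0)
    (A W : Matrix ι ι ℝ) :
    HasDerivAt (fun t : ℝ => trace ((M + t • A)⁻¹ * W) + Real.log |det (M + t • A)|)
      (trace (M⁻¹ * (1 - W * M⁻¹) * A)) 0 := by
  refine ((hasDerivAt_trace_inv_add_smul_mul ((isUnit_iff_isUnit_det M).2 hM.isUnit) A W).add
    (hasDerivAt_log_abs_det_add_smul hM A)).congr_deriv ?_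
  rw [Matrix.mul_sub, Matrix.mul_one, Matrix.sub_mul, trace_sub, Matrix.mul_assoc (M⁻¹ * A),
    trace_mul_comm (M⁻¹ * A), ← Matrix.mul_assoc, ← Matrix.mul_assoc]
  ring

end MatrixCalculus

theorem covMat_add_smul_single {m n : ℕ} (S : Matrix (Fin m) (Fin n) ℝ)
    (Sig : Matrix (Fin m) (Fin m) ℝ) (p : Fin n → ℝ) (i : Fin n) (t : ℝ) :
    covMat S Sig (p + t • Pi.single i 1) =
      covMat S Sig p + t • vecMulVec (S.col i) (S.col i) := by
  have hdiag : diagonal (p + t • Pi.single i 1) = diagonal p + t • diagonal (Pi.single i 1) := by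
    rw [← diagonal_smul, diagonal_add]
    rfl
  rw [covMat, covMat, hdiag, diagonal_single, single_eq_single_vecMulVec_single,
    Matrix.mul_add, Matrix.add_mul, Matrix.mul_smul, Matrix.smul_mul, mul_vecMulVec,
    vecMulVec_mul, mulVec_single_one, single_one_vecMul, row_transpose]
  abel

theorem mlObjective_eq_trace {m n : ℕ} (S : Matrix (Fin m) (Fin n) ℝ)
    (Sig : Matrix (Fin m) (Fin m) ℝ) (L : ℕ) (μ : Fin m → ℝ) (Y : Fin L → Fin m → ℝ)
    (p : Fin n → ℝ) :
    mlObjective S Sig L μ Y p =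
      trace ((covMat S Sig p)⁻¹ * empCov L μ Y) + Real.log |(covMat S Sig p).det| := by
  change _ = trace (_ * ((1 / (L : ℝ)) • ∑ i, vecMulVec (Y i - μ) (Y i - μ))) + _
  simp only [mlObjective, Matrix.mul_smul, Matrix.mul_sum, trace_smul, trace_sum,
    dotProduct_mulVec_self_eq_trace, smul_eq_mul]

theorem stmt7_general {m n : ℕ} (S : Matrix (Fin m) (Fin n) ℝ)
    (Sig : Matrix (Fin m) (Fin m) ℝ)
    (L : ℕ) (μ : Fin m → ℝ) (Y : Fin L → Fin m → ℝ)
    (p₀ : Fin n → ℝ) (hmin : IsLocalMin (mlObjective S Sig L μ Y) p₀)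
    (hpos : (covMat S Sig p₀).PosDef) :
    ∀ i : Fin n,
      ((Sᵀ * (covMat S Sig p₀)⁻¹ *
        (1 - empCov L μ Y * (covMat S Sig p₀)⁻¹) * S :
          Matrix (Fin n) (Fin n) ℝ)) i i = 0 := by
  intro i
  have hline : IsLocalMin (fun t : ℝ => mlObjective S Sig L μ Y (p₀ + t • Pi.single i 1)) 0 := by
    have hmin' : IsLocalMin (mlObjective S Sig L μ Y) (p₀ + (0 : ℝ) • Pi.single i 1) := by
      simpa using hmin
    exact hmin'.comp_continuous (g := fun t : ℝ => p₀ + t • Pi.single i 1) (by fun_prop)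
  have hderiv := hasDerivAt_trace_inv_mul_add_log_abs_det hpos.det_pos.ne'
    (vecMulVec (S.col i) (S.col i)) (empCov L μ Y)
  simp only [← covMat_add_smul_single, ← mlObjective_eq_trace] at hderiv
  rw [Matrix.mul_assoc Sᵀ, transpose_mul_mul_apply_self]
  exact hline.hasDerivAt_eq_zero hderiv

/-- If `p₀` is a local minimum of `Φ` and `M_{p₀}` is
positive definite, then every diagonal entry of
`Sᵀ M_{p₀}⁻¹ (I − W M_{p₀}⁻¹) S` is zero. -/
theorem stmt7 {m n : ℕ} (S : Matrix (Fin m) (Fin n) ℝ)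
    (Sig : Matrix (Fin m) (Fin m) ℝ) (hSig : Sig.IsSymm)
    (L : ℕ) (μ : Fin m → ℝ) (Y : Fin L → Fin m → ℝ)
    (p₀ : Fin n → ℝ) (hmin : IsLocalMin (mlObjective S Sig L μ Y) p₀)
    (hpos : (covMat S Sig p₀).PosDef) :
    ∀ i : Fin n,
      ((Sᵀ * (covMat S Sig p₀)⁻¹ *
        (1 - empCov L μ Y * (covMat S Sig p₀)⁻¹) * S :
          Matrix (Fin n) (Fin n) ℝ)) i i = 0 :=
  stmt7_general S Sig L μ Y p₀ hmin hpos
end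

section
/- Let S be a real m×n matrix such that rank(S̆̄) = n, and let 1 ≤ k ≤ m. Define the (m+1)×(n+k) matrix S′ whose first n columns are obtained by stacking a zero entry on top of the corresponding column of S, and whose last k columns are e₁ + e_{t+1} for t = 1,…,k, where e₁,…,e_{m+1} are the standard basis vectors of ℝ^{m+1} (i.e., S′ = [[0_{1×n}, 1_{1×k}],[S, I-on-top-of-0]] in block form, with the identity block I_{k×k} occupying rows 2 through k+1 of the last k columns and zeros below). Then rank(S̆̄′) = n + k, where S̆̄′ is formed from S′ in the same way as S̆̄ is formed from S. -/
open Matrix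

/-- The matrix of entrywise products of *distinct* pairs of rows of `S`:
`(S̆̄)_{(i,j),k} = S i k * S j k` for `i ≠ j`. -/
noncomputable def distinctPairProdMatrix {m n : ℕ} (S : Matrix (Fin m) (Fin n) ℝ) :
    Matrix {ij : Fin m × Fin m // ij.1 ≠ ij.2} (Fin n) ℝ :=
  Matrix.of fun ij k => S ij.1.1 k * S ij.1.2 k

/-- The extended signature matrix of Theorem 3: the first `n` columns are the
columns of `S` with a `0` stacked on top, and the last `k` columns are
`e₁ + e_{t+1}` for `t = 1, …, k` (a `1` in the top row, a `k × k` identity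
block in rows `2` through `k+1`, zeros below). -/
noncomputable def extendZeros {m n : ℕ} (S : Matrix (Fin m) (Fin n) ℝ) (k : ℕ) :
    Matrix (Fin (m + 1)) (Fin (n + k)) ℝ :=
  Matrix.of fun i j =>
    if hj : (j : ℕ) < n then
      if hi : (i : ℕ) = 0 then 0
      else S ⟨(i : ℕ) - 1, by have := i.isLt; omega⟩ ⟨(j : ℕ), hj⟩
    else if (i : ℕ) = 0 ∨ (i : ℕ) = (j : ℕ) - n + 1 then 1 else 0

lemma rank_eq_of_ker {N : ℕ} {κ : Type*} [Fintype κ] (M : Matrix κ (Fin N) ℝ)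
    (h : ∀ x, M.mulVec x = 0 → x = 0) : M.rank = N := by
  have hker : LinearMap.ker M.mulVecLin = ⊥ := by
    rw [LinearMap.ker_eq_bot']
    intro x hx
    exact h x hx
  have h1 := LinearMap.finrank_range_add_finrank_ker M.mulVecLin
  rw [hker, finrank_bot] at h1
  simpa [Matrix.rank, Module.finrank_fin_fun] using h1

lemma ker_of_rank_eq {N : ℕ} {κ : Type*} [Fintype κ] (M : Matrix κ (Fin N) ℝ)
    (h : M.rank = N) : ∀ x, M.mulVec x = 0 → x = 0 := by
  have h1 := LinearMap.finrank_range_add_finrank_ker M.mulVecLin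
  rw [show Module.finrank ℝ ↥(LinearMap.range M.mulVecLin) = M.rank from rfl, h,
    Module.finrank_fin_fun] at h1
  have h2 : Module.finrank ℝ ↥(LinearMap.ker M.mulVecLin) = 0 := by omega
  rw [Submodule.finrank_eq_zero] at h2
  intro x hx
  have : x ∈ LinearMap.ker M.mulVecLin := hx
  rw [h2] at this
  simpa using this

/-- **Theorem 3.** If `rank S̆̄ = n` and `1 ≤ k ≤ m`, then the
extended `(m+1) × (n+k)` signature matrix `S′` satisfies `rank S̆̄′ = n + k`. -/
theorem stmt9 {m n : ℕ} (S : Matrix (Fin m) (Fin n) ℝ)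
    (hrank : (distinctPairProdMatrix S).rank = n)
    (k : ℕ) (hk1 : 1 ≤ k) (hkm : k ≤ m) :
    (distinctPairProdMatrix (extendZeros S k)).rank = n + k := by
  have hinj := ker_of_rank_eq _ hrank
  apply rank_eq_of_ker
  intro x hx
  set T := extendZeros S k with hT
  -- entry computations
  have hT0cast : ∀ (h0 : 0 < m + 1) (c : Fin n), T ⟨0, h0⟩ (Fin.castAdd k c) = 0 := by
    intro h0 c
    simp [hT, extendZeros, c.isLt]
  have hT0nat : ∀ (h0 : 0 < m + 1) (s : Fin k), T ⟨0, h0⟩ (Fin.natAdd n s) = 1 := by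
    intro h0 s
    simp [hT, extendZeros]
  have hTscast : ∀ (i : Fin m) (c : Fin n),
      T ⟨(i : ℕ) + 1, by omega⟩ (Fin.castAdd k c) = S i c := by
    intro i c
    simp [hT, extendZeros, c.isLt]
  have hTsnat : ∀ (i : Fin m) (s : Fin k),
      T ⟨(i : ℕ) + 1, by omega⟩ (Fin.natAdd n s) =
        if (i : ℕ) = (s : ℕ) then 1 else 0 := by
    intro i s
    simp [hT, extendZeros]
  -- last k coordinates vanish
  have hz : ∀ s : Fin k, x (Fin.natAdd n s) = 0 := by
    intro s
    have hs : (s : ℕ) < m := lt_of_lt_of_le s.isLt hkm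
    have hne : (⟨0, by omega⟩ : Fin (m + 1)) ≠ ⟨(s : ℕ) + 1, by omega⟩ := by
      intro h
      simpa using congrArg Fin.val h
    have h := congrFun hx ⟨(⟨0, by omega⟩, ⟨(s : ℕ) + 1, by omega⟩), hne⟩
    rw [Matrix.mulVec, dotProduct] at h
    rw [Fin.sum_univ_add] at h
    have hs' : (⟨(s : ℕ) + 1, by omega⟩ : Fin (m + 1)) = ⟨((⟨(s : ℕ), hs⟩ : Fin m) : ℕ) + 1, by omega⟩ := rfl
    simp only [distinctPairProdMatrix, Matrix.of_apply, Pi.zero_apply] at h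
    rw [Finset.sum_congr rfl (fun (c : Fin n) _ => by
        rw [hT0cast (by omega) c, zero_mul, zero_mul]),
      Finset.sum_congr rfl (fun (t : Fin k) _ => by
        rw [hT0nat (by omega) t, hs', hTsnat ⟨(s : ℕ), hs⟩ t, one_mul])] at h
    simp only [Finset.sum_const_zero, zero_add] at h
    rw [Finset.sum_eq_single s] at h
    · simpa using h
    · intro b _ hb
      rw [if_neg (by simpa [Fin.val_eq_val] using fun hh => hb (Fin.ext hh).symm), zero_mul]
    · simp
  -- first n coordinates vanish
  have hy : (fun c : Fin n => x (Fin.castAdd k c)) = 0 := by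
    apply hinj
    funext ij
    obtain ⟨⟨i, j⟩, hij⟩ := ij
    have hne : (⟨(i : ℕ) + 1, by omega⟩ : Fin (m + 1)) ≠ ⟨(j : ℕ) + 1, by omega⟩ := by
      intro h
      apply hij
      have := congrArg Fin.val h
      simp at this
      exact Fin.ext this
    have h := congrFun hx ⟨(⟨(i : ℕ) + 1, by omega⟩, ⟨(j : ℕ) + 1, by omega⟩), hne⟩
    rw [Matrix.mulVec, dotProduct] at h
    rw [Fin.sum_univ_add] at h
    simp only [distinctPairProdMatrix, Matrix.of_apply, Pi.zero_apply] at h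
    rw [Finset.sum_congr rfl (fun (c : Fin n) _ => by
        rw [hTscast i c, hTscast j c]),
      Finset.sum_congr rfl (fun (t : Fin k) _ => by
        rw [hTsnat i t, hTsnat j t, hz t, mul_zero])] at h
    simp only [Finset.sum_const_zero, add_zero] at h
    rw [Matrix.mulVec, dotProduct]
    simpa [distinctPairProdMatrix] using h
  -- conclude
  funext c
  rcases lt_or_ge (c : ℕ) n with hc | hc
  · have : c = Fin.castAdd k ⟨(c : ℕ), hc⟩ := by
      apply Fin.ext; simp
    rw [this]
    exact congrFun hy ⟨(c : ℕ), hc⟩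
  · have hck : (c : ℕ) - n < k := by have := c.isLt; omega
    have : c = Fin.natAdd n ⟨(c : ℕ) - n, hck⟩ := by
      apply Fin.ext; simp; omega
    rw [this]
    exact hz _
end

section
/- For every m ≥ 1 and every n with 1 ≤ n ≤ m(m+1)/2, there exists a real m×n matrix S such that rank(S̄̄) = n. -/
open Matrix

/-!
The columns of `S̄̄` are the vectors `v ⊗ v` for the columns `v` of `S`, so it suffices to find
`n` vectors whose self-products are linearly independent. The self-products span a space of
dimension at least `m(m+1)/2`, since by polarisation
`e_a ⊗ e_b + e_b ⊗ e_a = (e_a + e_b) ⊗ (e_a + e_b) - e_a ⊗ e_a - e_b ⊗ e_b`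
their span contains the indicators of the `m(m+1)/2` unordered pairs `{a, b}`.
-/

open Submodule Set

section SelfProd

variable {ι R : Type*} [CommRing R]

def selfProd (v : ι → R) : ι × ι → R := fun p => v p.1 * v p.2

variable [DecidableEq ι]

def sym2Indicator (z : Sym2 ι) : ι × ι → R := fun p => if s(p.1, p.2) = z then 1 else 0

theorem linearIndependent_sym2Indicator [Fintype ι] [Nontrivial R] :
    LinearIndependent R (sym2Indicator (ι := ι) (R := R)) := by
  rw [Fintype.linearIndependent_iff]
  intro c hc z
  induction z using Sym2.ind with
  | _ a b => simpa [sym2Indicator, mul_ite] using congrFun hc (a, b)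

theorem sym2Indicator_diag (a : ι) :
    sym2Indicator s(a, a) = selfProd (Pi.single a (1 : R)) := by
  funext ⟨i, j⟩
  simp only [sym2Indicator, selfProd, Sym2.eq_iff, Pi.single_apply]
  split_ifs <;> simp_all

theorem sym2Indicator_of_ne {a b : ι} (hab : a ≠ b) :
    (sym2Indicator s(a, b) : ι × ι → R) = selfProd (Pi.single a 1 + Pi.single b 1)
      - selfProd (Pi.single a 1) - selfProd (Pi.single b 1) := by
  funext ⟨i, j⟩
  simp only [sym2Indicator, selfProd, Sym2.eq_iff, Pi.single_apply, Pi.add_apply, Pi.sub_apply]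
  split_ifs <;> simp_all

theorem sym2Indicator_mem_span_selfProd (z : Sym2 ι) :
    sym2Indicator z ∈ span R (range (selfProd (ι := ι) (R := R))) := by
  have mem (v : ι → R) : selfProd v ∈ span R (range selfProd) := subset_span ⟨v, rfl⟩
  induction z using Sym2.ind with
  | _ a b =>
    rcases eq_or_ne a b with rfl | hab
    · rw [sym2Indicator_diag]
      exact mem _
    · rw [sym2Indicator_of_ne hab]
      exact sub_mem (sub_mem (mem _) (mem _)) (mem _)

end SelfProd

theorem exists_linearIndependent_comp_of_le_finrank_span {K V ι : Type*} [Field K]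
    [AddCommGroup V] [Module K V] [FiniteDimensional K V] (v : ι → V) {n : ℕ}
    (hn : n ≤ Module.finrank K (span K (range v))) :
    ∃ a : Fin n → ι, LinearIndependent K (v ∘ a) := by
  obtain ⟨κ, b, -, hspan, hli⟩ := exists_linearIndependent' K v
  have := hli.finite
  have := Fintype.ofFinite κ
  rw [← hspan, finrank_span_eq_card hli] at hn
  obtain ⟨e⟩ : Nonempty (Fin n ↪ κ) := Function.Embedding.nonempty_of_card_le (by simpa)
  exact ⟨b ∘ e, hli.comp e e.injective⟩

theorem exists_linearIndependent_selfProd {ι K : Type*} [Fintype ι] [Field K] {n : ℕ}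
    (hn : n ≤ (Fintype.card ι + 1).choose 2) :
    ∃ v : Fin n → ι → K, LinearIndependent K (fun k => selfProd (v k)) := by
  classical
  have hdim : (Fintype.card ι + 1).choose 2 ≤
      Module.finrank K (span K (range (selfProd (ι := ι) (R := K)))) :=
    calc (Fintype.card ι + 1).choose 2
        = Module.finrank K (span K (range (sym2Indicator (ι := ι) (R := K)))) := by
          rw [finrank_span_eq_card linearIndependent_sym2Indicator, Sym2.card]
      _ ≤ _ := Submodule.finrank_mono
          (span_le.mpr (range_subset_iff.mpr sym2Indicator_mem_span_selfProd))
  exact exists_linearIndependent_comp_of_le_finrank_span _ (hn.trans hdim)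

theorem pairProdMatrix_transpose {m n : ℕ} (S : Matrix (Fin m) (Fin n) ℝ) :
    (pairProdMatrix S)ᵀ = fun k => selfProd (Sᵀ k) := rfl

theorem stmt10_general (m n : ℕ)
    (hn : n ≤ m * (m + 1) / 2) :
    ∃ S : Matrix (Fin m) (Fin n) ℝ, (pairProdMatrix S).rank = n := by
  have hn' : n ≤ (Fintype.card (Fin m) + 1).choose 2 := by
    rwa [Fintype.card_fin, Nat.choose_two_right, Nat.add_sub_cancel, Nat.mul_comm]
  obtain ⟨v, hv⟩ := exists_linearIndependent_selfProd (K := ℝ) hn'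
  refine ⟨(Matrix.of v)ᵀ, ?_⟩
  rw [← rank_transpose, pairProdMatrix_transpose]
  exact hv.rank_matrix.trans (Fintype.card_fin n)

/-- **Corollary 1, first part.** For every `m ≥ 1` and every
`n` with `1 ≤ n ≤ m(m+1)/2` there is a real `m × n` matrix `S` whose matrix
`S̄̄` of entrywise products of pairs of rows has rank `n`. -/
theorem stmt10 (m n : ℕ) (hm : 1 ≤ m) (hn1 : 1 ≤ n)
    (hn : n ≤ m * (m + 1) / 2) :
    ∃ S : Matrix (Fin m) (Fin n) ℝ, (pairProdMatrix S).rank = n :=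
  stmt10_general m n hn
end

section
/- For every m ≥ 2 and every n with 1 ≤ n ≤ m(m−1)/2, there exists a real m×n matrix S such that rank(S̆̄) = n. -/
open Matrix

/-- **Corollary 1, second part.** For every `m ≥ 2` and every
`n` with `1 ≤ n ≤ m(m−1)/2` there is a real `m × n` matrix `S` whose matrix
`S̆̄` of entrywise products of distinct pairs of rows has rank `n`. -/
theorem stmt11 (m n : ℕ) (hm : 2 ≤ m) (hn1 : 1 ≤ n)
    (hn : n ≤ m * (m - 1) / 2) :
    ∃ S : Matrix (Fin m) (Fin n) ℝ, (distinctPairProdMatrix S).rank = n := by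
  classical
  -- `P` is the type of 2-element subsets of `Fin m`.
  have hcard : Fintype.card (Fin n) ≤ Fintype.card {s : Finset (Fin m) // s.card = 2} := by
    rw [Fintype.card_finset_len, Fintype.card_fin, Fintype.card_fin, Nat.choose_two_right]
    exact hn
  obtain ⟨e⟩ := Function.Embedding.nonempty_of_card_le hcard
  have h2 : ∀ k : Fin n, ∃ a b : Fin m, a ≠ b ∧ (e k).1 = {a, b} := fun k =>
    Finset.card_eq_two.mp (e k).2
  choose a b hab hset using h2
  set S : Matrix (Fin m) (Fin n) ℝ :=
    Matrix.of fun i k => if i ∈ (e k).1 then (1 : ℝ) else 0 with hS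
  refine ⟨S, ?_⟩
  set D := distinctPairProdMatrix S with hD
  -- the "row selection" matrix
  set r : Fin n → {ij : Fin m × Fin m // ij.1 ≠ ij.2} := fun k => ⟨(a k, b k), hab k⟩ with hr
  set Pm : Matrix (Fin n) {ij : Fin m × Fin m // ij.1 ≠ ij.2} ℝ :=
    Matrix.of fun k ij => if ij = r k then (1 : ℝ) else 0 with hPm
  have key : Pm * D = 1 := by
    ext k k'
    have : (Pm * D) k k' = D (r k) k' := by
      simp [Matrix.mul_apply, hPm, ite_mul, Finset.sum_ite_eq]
    rw [this]
    have hD' : D (r k) k' =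
        (if a k ∈ (e k').1 then (1 : ℝ) else 0) * (if b k ∈ (e k').1 then (1 : ℝ) else 0) := rfl
    rw [hD']
    by_cases hkk : k = k'
    · subst hkk
      have ha : a k ∈ (e k).1 := by rw [hset k]; simp
      have hb : b k ∈ (e k).1 := by rw [hset k]; simp
      simp [ha, hb]
    · have : ¬ (a k ∈ (e k').1 ∧ b k ∈ (e k').1) := by
        rintro ⟨h1, h2⟩
        apply hkk
        apply e.injective
        apply Subtype.ext
        have hsub : (e k).1 ⊆ (e k').1 := by
          rw [hset k]
          intro x hx
          simp only [Finset.mem_insert, Finset.mem_singleton] at hx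
          rcases hx with rfl | rfl
          · exact h1
          · exact h2
        exact Finset.eq_of_subset_of_card_le hsub (by rw [(e k).2, (e k').2])
      rcases not_and_or.mp this with h | h
      · simp [h, Matrix.one_apply, hkk]
      · simp [h, Matrix.one_apply, hkk]
  refine le_antisymm ?_ ?_
  · exact (D.rank_le_card_width).trans (by simp)
  · calc n = (1 : Matrix (Fin n) (Fin n) ℝ).rank := by simp [Matrix.rank_one]
    _ = (Pm * D).rank := by rw [key]
    _ ≤ D.rank := Matrix.rank_mul_le_right Pm D
end

section
/- Let S be a real m×n matrix that has at least one row all of whose entries are nonzero. For x = (x₁,…,x_L) ∈ ({−1,1}ⁿ)^L, let Ŝ(x) denote the Lm×n real matrix obtained by vertically stacking the blocks S·diag(x₁),…,S·diag(x_L). Let f(L) be the fraction of tuples x ∈ ({−1,1}ⁿ)^L (out of all 2^{nL} tuples, i.e., the probability under the uniform distribution, equivalently under i.i.d. uniform ±1 entries) for which rank(Ŝ(x)) = n. Then f(L) → 1 as L → ∞. -/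
open Matrix Filter

/-- The stacked matrix `Ŝ(x)` obtained by vertically stacking the blocks
`S · diag(x₁), …, S · diag(x_L)`, where the `±1` sign vectors are encoded by
Boolean vectors (`true ↦ 1`, `false ↦ −1`). -/
noncomputable def stackedMatrix {m n : ℕ} (S : Matrix (Fin m) (Fin n) ℝ)
    {L : ℕ} (x : Fin L → Fin n → Bool) :
    Matrix (Fin L × Fin m) (Fin n) ℝ :=
  Matrix.of fun p j => S p.2 j * (if x p.1 j then (1 : ℝ) else -1)

/-- The fraction of tuples `x ∈ ({−1,1}ⁿ)^L` for which `rank (Ŝ(x)) = n`,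
i.e. the probability of full column rank under i.i.d. uniform `±1` signs. -/
noncomputable def fullRankFraction {m n : ℕ} (S : Matrix (Fin m) (Fin n) ℝ)
    (L : ℕ) : ℝ :=
  (Nat.card {x : Fin L → Fin n → Bool // (stackedMatrix S x).rank = n} : ℝ) /
    2 ^ (n * L)

open Submodule

noncomputable def signVec {n : ℕ} (e : Fin n → Bool) : Fin n → ℝ :=
  fun j => if e j then (1 : ℝ) else -1

lemma signVec_inj {n : ℕ} : Function.Injective (signVec (n := n)) := by
  intro a b h
  funext j
  have := congrFun h j
  simp only [signVec] at this
  cases ha : a j <;> cases hb : b j <;> simp_all <;> linarith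

lemma span_signVec_top {n : ℕ} : span ℝ (Set.range (signVec (n := n))) = ⊤ := by
  rw [eq_top_iff]
  rw [← (Pi.basisFun ℝ (Fin n)).span_eq, span_le]
  rintro _ ⟨j, rfl⟩
  have h1 : signVec (fun _ => true) ∈ span ℝ (Set.range (signVec (n := n))) :=
    subset_span ⟨_, rfl⟩
  have h2 : signVec (fun k => !(decide (k = j))) ∈ span ℝ (Set.range (signVec (n := n))) :=
    subset_span ⟨_, rfl⟩
  have : Pi.basisFun ℝ (Fin n) j =
      (1/2 : ℝ) • (signVec (fun _ => true) - signVec (fun k => !(decide (k = j)))) := by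
    funext k
    simp [signVec, Pi.basisFun_apply]
    by_cases hk : k = j <;> simp [hk, Pi.single_apply] <;> norm_num
  rw [this]
  exact smul_mem _ _ (sub_mem h1 h2)

lemma rank_eq_of_span {m n L : ℕ} (S : Matrix (Fin m) (Fin n) ℝ)
    (q : Fin m) (hq : ∀ j, S q j ≠ 0) (x : Fin L → Fin n → Bool)
    (hx : span ℝ (Set.range fun l => signVec (x l)) = ⊤) :
    (stackedMatrix S x).rank = n := by
  have hker : LinearMap.ker (stackedMatrix S x).mulVecLin = ⊥ := by
    rw [LinearMap.ker_eq_bot']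
    intro v hv
    -- the vector w j = S q j * v j is orthogonal to all signVec (x l)
    set w : Fin n → ℝ := fun j => S q j * v j with hw
    have hdot : ∀ l : Fin L, (∑ j, signVec (x l) j * w j) = 0 := by
      intro l
      have := congrFun hv (l, q)
      simp only [Matrix.mulVecLin_apply, Matrix.mulVec, dotProduct, stackedMatrix,
        Matrix.of_apply, Pi.zero_apply] at this
      rw [← this]
      apply Finset.sum_congr rfl
      intro j _
      simp [signVec, w]
      try ring
    have hall : ∀ u : Fin n → ℝ, (∑ j, u j * w j) = 0 := by
      intro u
      have hmem : u ∈ span ℝ (Set.range fun l => signVec (x l)) := hx ▸ mem_top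
      induction hmem using Submodule.span_induction with
      | mem z hz => obtain ⟨l, rfl⟩ := hz; exact hdot l
      | zero => simp
      | add a b _ _ ha hb => simp [add_mul, Finset.sum_add_distrib, ha, hb]
      | smul c a _ ha =>
        simp only [Pi.smul_apply, smul_eq_mul, mul_assoc, ← Finset.mul_sum, ha, mul_zero]
    have hw0 : w = 0 := by
      have := hall w
      have hsq : ∀ j ∈ Finset.univ, (0:ℝ) ≤ w j * w j := fun j _ => mul_self_nonneg _
      funext j
      have := (Finset.sum_eq_zero_iff_of_nonneg hsq).mp this j (Finset.mem_univ j)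
      simpa using mul_self_eq_zero.mp this
    funext j
    have : S q j * v j = 0 := congrFun hw0 j
    exact (mul_eq_zero.mp this).resolve_left (hq j)
  have h1 := LinearMap.finrank_range_add_finrank_ker (stackedMatrix S x).mulVecLin
  rw [hker, finrank_bot] at h1
  have h2 : Module.finrank ℝ (Fin n → ℝ) = n := Module.finrank_fin_fun ℝ
  rw [Matrix.rank]
  omega

open Classical in
lemma bad_card_le (n L : ℕ) :
    Nat.card {x : Fin L → Fin n → Bool //
        span ℝ (Set.range fun l => signVec (x l)) ≠ ⊤}
      ≤ 2 ^ (2 ^ n) * (2 ^ n - 1) ^ L := by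
  set Bad := {x : Fin L → Fin n → Bool //
        span ℝ (Set.range fun l => signVec (x l)) ≠ ⊤}
  set T := Σ A : {A : Finset (Fin n → Bool) // A ≠ Finset.univ},
      (Fin L → {e // e ∈ A.1})
  have hAmem : ∀ (x : Bad) (l : Fin L),
      x.1 l ∈ Finset.univ.filter
        (fun e => signVec e ∈ span ℝ (Set.range fun l => signVec (x.1 l))) := by
    intro x l
    simp only [Finset.mem_filter, Finset.mem_univ, true_and]
    exact subset_span ⟨l, rfl⟩
  have hAne : ∀ x : Bad,
      Finset.univ.filter
        (fun e => signVec e ∈ span ℝ (Set.range fun l => signVec (x.1 l)))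
        ≠ Finset.univ := by
    intro x hEq
    apply x.2
    rw [eq_top_iff]
    refine le_trans (le_of_eq span_signVec_top.symm) (span_le.mpr ?_)
    rintro _ ⟨e, rfl⟩
    have : e ∈ Finset.univ.filter
        (fun e => signVec e ∈ span ℝ (Set.range fun l => signVec (x.1 l))) := by
      rw [hEq]; exact Finset.mem_univ e
    exact (Finset.mem_filter.mp this).2
  have hinj : ∃ f : Bad → T, Function.Injective f := by
    refine ⟨fun x => ⟨⟨_, hAne x⟩, fun l => ⟨x.1 l, hAmem x l⟩⟩, ?_⟩
    intro x y h
    apply Subtype.ext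
    funext l
    exact congrFun (congr_arg (fun z : T => fun l => (z.2 l).1) h) l
  obtain ⟨f, hf⟩ := hinj
  calc Nat.card Bad ≤ Nat.card T := Nat.card_le_card_of_injective f hf
    _ ≤ 2 ^ (2 ^ n) * (2 ^ n - 1) ^ L := by
        rw [Nat.card_eq_fintype_card, Fintype.card_sigma]
        have hb : ∀ A : {A : Finset (Fin n → Bool) // A ≠ Finset.univ},
            Fintype.card (Fin L → {e // e ∈ A.1}) ≤ (2 ^ n - 1) ^ L := by
          intro A
          rw [Fintype.card_fun, Fintype.card_fin]
          apply Nat.pow_le_pow_left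
          have h1 : Fintype.card {e // e ∈ A.1} = A.1.card := Fintype.card_coe _
          have h2 : A.1.card < 2 ^ n := by
            have := (Finset.card_lt_iff_ne_univ A.1).mpr A.2
            simpa using this
          omega
        calc ∑ A : {A : Finset (Fin n → Bool) // A ≠ Finset.univ},
              Fintype.card (Fin L → {e // e ∈ A.1})
            ≤ ∑ _A : {A : Finset (Fin n → Bool) // A ≠ Finset.univ}, (2^n - 1)^L :=
              Finset.sum_le_sum fun A _ => hb A
          _ = Fintype.card {A : Finset (Fin n → Bool) // A ≠ Finset.univ} * (2^n - 1)^L := by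
              rw [Finset.sum_const, Finset.card_univ, smul_eq_mul]
          _ ≤ 2 ^ (2 ^ n) * (2 ^ n - 1) ^ L := by
              apply Nat.mul_le_mul_right
              calc Fintype.card {A : Finset (Fin n → Bool) // A ≠ Finset.univ}
                  ≤ Fintype.card (Finset (Fin n → Bool)) := Fintype.card_subtype_le _
                _ = 2 ^ (2 ^ n) := by simp [Fintype.card_finset]

/-- **Theorem 5.** If some row of `S` has no zero entry, then
the probability that the stacked matrix `Ŝ(x)` built from `L` i.i.d. uniform
`±1` sign vectors has full column rank `n` tends to `1` as `L → ∞`. -/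
theorem stmt13 {m n : ℕ} (S : Matrix (Fin m) (Fin n) ℝ)
    (hrow : ∃ q : Fin m, ∀ j : Fin n, S q j ≠ 0) :
    Tendsto (fun L : ℕ => fullRankFraction S L) atTop (nhds 1) := by
  classical
  obtain ⟨q, hq⟩ := hrow
  set C : ℝ := 2 ^ (2 ^ n) with hC
  set r : ℝ := ((2 ^ n - 1 : ℕ) : ℝ) / 2 ^ n with hr
  have h2n : (0:ℝ) < 2 ^ n := by positivity
  have hr0 : 0 ≤ r := by positivity
  have hr1 : r < 1 := by
    rw [hr, div_lt_one h2n]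
    have h : (2 ^ n - 1 : ℕ) < 2 ^ n := by
      have := Nat.one_le_two_pow (n := n); omega
    calc ((2 ^ n - 1 : ℕ) : ℝ) < ((2 ^ n : ℕ) : ℝ) := by exact_mod_cast h
      _ = 2 ^ n := by push_cast; ring
  have key : ∀ L : ℕ, 1 - C * r ^ L ≤ fullRankFraction S L ∧ fullRankFraction S L ≤ 1 := by
    intro L
    have htot : Fintype.card (Fin L → Fin n → Bool) = 2 ^ (n * L) := by
      rw [Fintype.card_fun, Fintype.card_fun]
      simp [← pow_mul, mul_comm]
    have hB := bad_card_le n L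
    have hmono : Nat.card {x : Fin L → Fin n → Bool //
          span ℝ (Set.range fun l => signVec (x l)) = ⊤}
        ≤ Nat.card {x : Fin L → Fin n → Bool // (stackedMatrix S x).rank = n} := by
      apply Nat.card_le_card_of_injective
        (fun y => ⟨y.1, rank_eq_of_span S q hq y.1 y.2⟩)
      intro a b h
      exact Subtype.ext
        (congr_arg (fun z : {x : Fin L → Fin n → Bool // (stackedMatrix S x).rank = n} => z.1) h)
    have hsplit : Nat.card {x : Fin L → Fin n → Bool //
          span ℝ (Set.range fun l => signVec (x l)) = ⊤}
        + Nat.card {x : Fin L → Fin n → Bool //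
          ¬ (span ℝ (Set.range fun l => signVec (x l)) = ⊤)} = 2 ^ (n * L) := by
      rw [Nat.card_eq_fintype_card, Nat.card_eq_fintype_card,
        Fintype.card_subtype_compl]
      have hle := Fintype.card_subtype_le
        (fun x : Fin L → Fin n → Bool => span ℝ (Set.range fun l => signVec (x l)) = ⊤)
      rw [htot] at hle ⊢
      exact Nat.add_sub_cancel' hle
    have hB' : Nat.card {x : Fin L → Fin n → Bool //
          ¬ (span ℝ (Set.range fun l => signVec (x l)) = ⊤)}
        ≤ 2 ^ (2 ^ n) * (2 ^ n - 1) ^ L := hB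
    have hGle : Nat.card {x : Fin L → Fin n → Bool // (stackedMatrix S x).rank = n}
        ≤ 2 ^ (n * L) := by
      rw [Nat.card_eq_fintype_card]
      exact htot ▸ Fintype.card_subtype_le _
    have hGge : (2 : ℝ) ^ (n * L) - 2 ^ (2 ^ n) * ((2 ^ n - 1 : ℕ) : ℝ) ^ L
        ≤ (Nat.card {x : Fin L → Fin n → Bool // (stackedMatrix S x).rank = n} : ℝ) := by
      have h1 : (2 : ℕ) ^ (n * L) ≤ Nat.card {x : Fin L → Fin n → Bool //
          (stackedMatrix S x).rank = n} + 2 ^ (2 ^ n) * (2 ^ n - 1) ^ L := by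
        rw [← hsplit]; exact Nat.add_le_add hmono hB'
      have h2 := Nat.cast_le (α := ℝ) |>.mpr h1
      push_cast at h2 ⊢
      linarith
    constructor
    · rw [fullRankFraction, le_div_iff₀ (by positivity : (0:ℝ) < 2 ^ (n * L))]
      have hpow : (2 : ℝ) ^ (n * L) = ((2:ℝ) ^ n) ^ L := by rw [← pow_mul]
      calc (1 - C * r ^ L) * 2 ^ (n * L)
          = 2 ^ (n * L) - C * (r ^ L * 2 ^ (n * L)) := by ring
        _ = 2 ^ (n * L) - 2 ^ (2 ^ n) * ((2 ^ n - 1 : ℕ) : ℝ) ^ L := by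
            rw [hC, hr, div_pow, hpow, div_mul_cancel₀]
            positivity
        _ ≤ _ := hGge
    · rw [fullRankFraction, div_le_one (by positivity)]
      exact_mod_cast hGle
  have hlow : Tendsto (fun L : ℕ => 1 - C * r ^ L) atTop (nhds 1) := by
    have h1 := (tendsto_pow_atTop_nhds_zero_of_lt_one hr0 hr1).const_mul C
    have h2 := ((tendsto_const_nhds : Tendsto (fun _ : ℕ => (1:ℝ)) atTop (nhds 1))).sub h1
    simpa using h2
  exact tendsto_of_tendsto_of_tendsto_of_le_of_le hlow tendsto_const_nhds
    (fun L => (key L).1) (fun L => (key L).2)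
end

section
/- Let S be a real m×n matrix and suppose its q-th row has no zero entries. Let x₁,…,x_L ∈ ℝⁿ, let Ŝ denote the Lm×n matrix obtained by vertically stacking the blocks S·diag(x₁),…,S·diag(x_L), and let X denote the L×n matrix whose i-th row is x_iᵀ. Then rank(Ŝ) ≥ rank(X); in particular, if rank(X) = n then rank(Ŝ) = n. -/
open Matrix

lemma aux_rank_row_submatrix_le {k m n : Type*} [Fintype n] [Fintype k] [Fintype m]
    (A : Matrix k n ℝ) (f : m → k) : (A.submatrix f id).rank ≤ A.rank := by
  have h : (A.submatrix f id).mulVecLin = LinearMap.funLeft ℝ ℝ f ∘ₗ A.mulVecLin := by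
    ext v j
    rfl
  rw [Matrix.rank, Matrix.rank, h, LinearMap.range_comp]
  exact Submodule.finrank_map_le _ _

/-- Let `S` have a row `q` with no zero entries, let
`x₁, …, x_L ∈ ℝⁿ`, let `Ŝ` be the `Lm × n` matrix stacking the blocks
`S · diag(x_i)`, and let `X` be the `L × n` matrix with rows `x_iᵀ`.  Then
`rank Ŝ ≥ rank X`; in particular, if `rank X = n` then `rank Ŝ = n`. -/
theorem stmt14 {m n L : ℕ} (S : Matrix (Fin m) (Fin n) ℝ)
    (q : Fin m) (hq : ∀ j : Fin n, S q j ≠ 0)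
    (x : Fin L → Fin n → ℝ) :
    (Matrix.of fun (i : Fin L) (j : Fin n) => x i j).rank ≤
        (Matrix.of fun (p : Fin L × Fin m) (j : Fin n) =>
          S p.2 j * x p.1 j).rank ∧
      ((Matrix.of fun (i : Fin L) (j : Fin n) => x i j).rank = n →
        (Matrix.of fun (p : Fin L × Fin m) (j : Fin n) =>
          S p.2 j * x p.1 j).rank = n) := by
  set Shat : Matrix (Fin L × Fin m) (Fin n) ℝ :=
    Matrix.of fun (p : Fin L × Fin m) (j : Fin n) => S p.2 j * x p.1 j with hShat
  have hX : (Matrix.of fun (i : Fin L) (j : Fin n) => x i j) =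
      (Shat.submatrix (fun i => (i, q)) id) * Matrix.diagonal (fun j => (S q j)⁻¹) := by
    ext i j
    rw [Matrix.mul_diagonal]
    simp only [Matrix.submatrix_apply, hShat, Matrix.of_apply, id]
    rw [mul_comm (S q j) (x i j), mul_assoc, mul_inv_cancel₀ (hq j), mul_one]
  have h1 : (Matrix.of fun (i : Fin L) (j : Fin n) => x i j).rank ≤ Shat.rank := by
    rw [hX]
    exact le_trans (Matrix.rank_mul_le_left _ _) (aux_rank_row_submatrix_le Shat _)
  refine ⟨h1, fun hr => le_antisymm ?_ ?_⟩
  · simpa using Shat.rank_le_card_width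
  · omega
end
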